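/- Let F = 3·z₀²z₁²z₂² − (z₀⁵z₁ + z₂⁵z₀ + z₁⁵z₂). The set of nonzero points of ℂ³ at which all three partial derivatives ∂F/∂z₀, ∂F/∂z₁, ∂F/∂z₂ vanish is exactly { c·(λᵏ, λ²ᵏ, λ⁴ᵏ) : c ∈ ℂ ∖ {0}, k ∈ {0,1,…,6} }, where λ = exp(2πi/7). In particular, the plane projective sextic curve {F = 0} has exactly seven singular points, and these form a single orbit of the projective transformation [z₀:z₁:z₂] ↦ [λz₀ : λ²z₁ : λ⁴z₂] through the point [1:1:1]. -/

import Mathlib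

/-!
Write `g(a, b, c) = 6ab²c² − 5a⁴b − c⁵` (`sexticPartial`) for `∂F/∂z₀`; as `F` is invariant
under cyclically permuting the variables, the partials at `(a, b, c)` are `g(a, b, c)`,
`g(b, c, a)`, `g(c, a, b)`.
A zero coordinate of a critical point forces the others to vanish, since `g(0, b, c) = −c⁵`.
Multiplying the partials by `a`, `b`, `c` gives a linear system of determinant `126` expressing
`a⁵b`, `b⁵c`, `c⁵a` through `a²b²c²`: all four monomials are equal, so `b³ = a²c` and `c³ = ab²`
at a critical point with nonzero coordinates. Hence `b = ζa`, `c = ζ³a` with `ζ⁷ = 1`, i.e. the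
point is a multiple of `(ζ, ζ², ζ⁴)`.
-/

open MvPolynomial

noncomputable def lam : ℂ := Complex.exp (2 * Real.pi * Complex.I / 7)

/-- The singular sextic `F = 3·z₀²z₁²z₂² − (z₀⁵z₁ + z₂⁵z₀ + z₁⁵z₂)`. -/
noncomputable def Fsing : MvPolynomial (Fin 3) ℂ :=
  3 * (X 0 ^ 2 * X 1 ^ 2 * X 2 ^ 2) - (X 0 ^ 5 * X 1 + X 2 ^ 5 * X 0 + X 1 ^ 5 * X 2)

/-- The point `(λᵏ, λ²ᵏ, λ⁴ᵏ) ∈ ℂ³`. -/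
noncomputable def pPoint (k : ℕ) : Fin 3 → ℂ := ![lam ^ k, lam ^ (2 * k), lam ^ (4 * k)]

def sexticPartial {R : Type*} [CommRing R] (a b c : R) : R :=
  6 * a * b ^ 2 * c ^ 2 - 5 * a ^ 4 * b - c ^ 5

section SexticPartial

variable {R K : Type*} [CommRing R] [Field K] [CharZero K] {a b c : K}

theorem eq_zero_of_sexticPartial_eq_zero [NoZeroDivisors R] {a b c : R}
    (h₀ : sexticPartial a b c = 0) (h₂ : sexticPartial c a b = 0) (ha : a = 0) :
    b = 0 ∧ c = 0 := by
  subst ha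
  unfold sexticPartial at h₀ h₂
  have hc : c = 0 := pow_eq_zero_iff (n := 5) (by norm_num) |>.mp <| by
    linear_combination -h₀
  subst hc
  exact ⟨pow_eq_zero_iff (n := 5) (by norm_num) |>.mp <| by linear_combination -h₂, rfl⟩

theorem pow_five_mul_eq_of_sexticPartial_eq_zero (h₀ : sexticPartial a b c = 0)
    (h₁ : sexticPartial b c a = 0) (h₂ : sexticPartial c a b = 0) :
    b ^ 5 * c = a ^ 2 * b ^ 2 * c ^ 2 := by
  unfold sexticPartial at h₀ h₁ h₂
  linear_combination (5 / 126 * a) * h₀ + (-25 / 126 * b) * h₁ + (-1 / 126 * c) * h₂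

theorem pow_three_eq_of_sexticPartial_eq_zero (h₀ : sexticPartial a b c = 0)
    (h₁ : sexticPartial b c a = 0) (h₂ : sexticPartial c a b = 0) (hb : b ≠ 0) (hc : c ≠ 0) :
    b ^ 3 = a ^ 2 * c := by
  have h := pow_five_mul_eq_of_sexticPartial_eq_zero h₀ h₁ h₂
  refine mul_left_cancel₀ (mul_ne_zero (pow_ne_zero 2 hb) hc) ?_
  linear_combination h

theorem exists_pow_seven_eq_one_of_sexticPartial_eq_zero (h₀ : sexticPartial a b c = 0)
    (h₁ : sexticPartial b c a = 0) (h₂ : sexticPartial c a b = 0)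
    (ha : a ≠ 0) (hb : b ≠ 0) (hc : c ≠ 0) :
    ∃ ζ : K, ζ ^ 7 = 1 ∧ b = ζ * a ∧ c = ζ ^ 3 * a := by
  have hb3 := pow_three_eq_of_sexticPartial_eq_zero h₀ h₁ h₂ hb hc
  have hc3 := pow_three_eq_of_sexticPartial_eq_zero h₁ h₂ h₀ hc ha
  set ζ := b / a with hζ_def
  have hb' : b = ζ * a := by rw [hζ_def, div_mul_cancel₀ b ha]
  have hc' : c = ζ ^ 3 * a := by
    refine mul_left_cancel₀ (pow_ne_zero 2 ha) ?_
    rw [← hb3, hb']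
    ring
  have hζ : ζ ≠ 0 := div_ne_zero hb ha
  refine ⟨ζ, mul_left_cancel₀ (mul_ne_zero (pow_ne_zero 2 hζ) (pow_ne_zero 3 ha)) ?_, hb', hc'⟩
  rw [hb', hc'] at hc3
  linear_combination hc3

theorem sexticPartial_orbit_eq_zero {d t : R} (ht : t ^ 7 = 1) :
    sexticPartial (d * t) (d * t ^ 2) (d * t ^ 4) = 0 ∧
      sexticPartial (d * t ^ 2) (d * t ^ 4) (d * t) = 0 ∧
      sexticPartial (d * t ^ 4) (d * t) (d * t ^ 2) = 0 := by
  unfold sexticPartial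
  refine ⟨?_, ?_, ?_⟩
  · linear_combination (d ^ 5 * t ^ 6 * (5 - t ^ 7)) * ht
  · linear_combination (d ^ 5 * t ^ 5) * ht
  · linear_combination (-5 * d ^ 5 * t ^ 10) * ht

theorem sexticPartial_eq_zero_iff {ζ : K} (hζ : IsPrimitiveRoot ζ 7) :
    (¬(a = 0 ∧ b = 0 ∧ c = 0) ∧ sexticPartial a b c = 0 ∧ sexticPartial b c a = 0 ∧
        sexticPartial c a b = 0) ↔
      ∃ d : K, d ≠ 0 ∧ ∃ k : Fin 7,
        a = d * ζ ^ (k : ℕ) ∧ b = d * (ζ ^ (k : ℕ)) ^ 2 ∧ c = d * (ζ ^ (k : ℕ)) ^ 4 := by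
  constructor
  · rintro ⟨hne, h₀, h₁, h₂⟩
    have ha : a ≠ 0 := fun ha => hne ⟨ha, eq_zero_of_sexticPartial_eq_zero h₀ h₂ ha⟩
    have hb : b ≠ 0 := fun hb => ha (eq_zero_of_sexticPartial_eq_zero h₁ h₀ hb).2
    have hc : c ≠ 0 := fun hc => hb (eq_zero_of_sexticPartial_eq_zero h₂ h₁ hc).2
    obtain ⟨ξ, hξ, rfl, rfl⟩ := exists_pow_seven_eq_one_of_sexticPartial_eq_zero h₀ h₁ h₂ ha hb hc
    obtain ⟨k, hk, rfl⟩ := hζ.eq_pow_of_pow_eq_one hξ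
    have hξ0 : ζ ^ k ≠ 0 := pow_ne_zero _ (hζ.ne_zero (by norm_num))
    refine ⟨a / ζ ^ k, div_ne_zero ha hξ0, ⟨k, hk⟩, ?_, ?_, ?_⟩ <;> field_simp
  · rintro ⟨d, hd, k, rfl, rfl, rfl⟩
    have hξ : ζ ^ (k : ℕ) ≠ 0 := pow_ne_zero _ (hζ.ne_zero (by norm_num))
    refine ⟨fun h => mul_ne_zero hd hξ h.1, sexticPartial_orbit_eq_zero ?_⟩
    rw [← pow_mul, mul_comm, pow_mul, hζ.pow_eq_one, one_pow]

end SexticPartial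

theorem eq_of_mul_eq_of_sq_mul_eq {K : Type*} [Field K] {s t d : K} (hs : s ≠ 0) (ht : t ≠ 0)
    (h₁ : s = d * t) (h₂ : s ^ 2 = d * t ^ 2) : s = t := by
  have hd : d = 1 := by
    have hd : d ≠ 0 := by rintro rfl; simp [hs] at h₁
    refine mul_left_cancel₀ (mul_ne_zero hd (pow_ne_zero 2 ht)) ?_
    rw [h₁] at h₂
    linear_combination h₂
  rw [h₁, hd, one_mul]

theorem lam_isPrimitiveRoot : IsPrimitiveRoot lam 7 := by
  simpa [lam] using Complex.isPrimitiveRoot_exp 7 (by norm_num)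

theorem eval_pderiv_Fsing (v : Fin 3 → ℂ) (i : Fin 3) :
    eval v (pderiv i Fsing) = sexticPartial (v i) (v (i + 1)) (v (i + 2)) := by
  have h3 : (3 : MvPolynomial (Fin 3) ℂ) = C 3 := (map_ofNat C 3).symm
  fin_cases i <;>
    simp [Fsing, sexticPartial, h3, pderiv_X] <;> ring

theorem pPoint_apply (k : ℕ) :
    pPoint k = ![lam ^ k, (lam ^ k) ^ 2, (lam ^ k) ^ 4] := by
  simp only [pPoint, ← pow_mul, mul_comm]

/-- The nonzero common zeros of the partial derivatives of `F` are exactly the points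
`c·(λᵏ, λ²ᵏ, λ⁴ᵏ)` with `c ≠ 0` and `0 ≤ k ≤ 6`; moreover these seven points give seven
pairwise distinct projective classes, so the projective curve `{F = 0}` has exactly seven
singular points, forming one orbit of `[z₀:z₁:z₂] ↦ [λz₀:λ²z₁:λ⁴z₂]` through `[1:1:1]`. -/
theorem singular_points_of_Fsing :
    ({v : Fin 3 → ℂ | v ≠ 0 ∧ ∀ i : Fin 3, eval v (pderiv i Fsing) = 0} =
      {v : Fin 3 → ℂ | ∃ c : ℂ, c ≠ 0 ∧ ∃ k : Fin 7, v = c • pPoint (k : ℕ)}) ∧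
    (∀ k l : Fin 7, k ≠ l → ¬∃ c : ℂ, pPoint (l : ℕ) = c • pPoint (k : ℕ)) := by
  refine ⟨Set.ext fun v => ?_, fun k l hkl ⟨c, h⟩ => hkl ?_⟩
  · simpa [eval_pderiv_Fsing, funext_iff, Fin.forall_fin_succ, pPoint_apply] using
      sexticPartial_eq_zero_iff (a := v 0) (b := v 1) (c := v 2) lam_isPrimitiveRoot
  · have h₁ := congrFun h 0
    have h₂ := congrFun h 1
    simp only [pPoint_apply, Pi.smul_apply, smul_eq_mul, Matrix.cons_val_zero,
      Matrix.cons_val_one] at h₁ h₂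
    have hlam : lam ≠ 0 := lam_isPrimitiveRoot.ne_zero (by norm_num)
    exact Fin.ext <| lam_isPrimitiveRoot.pow_inj k.isLt l.isLt <|
      (eq_of_mul_eq_of_sq_mul_eq (pow_ne_zero _ hlam) (pow_ne_zero _ hlam) h₁ h₂).symm
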